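/- If a CRC stably computes a function f : R_{\geq 0}^n \to R_{\geq 0} and is output-oblivious (its output species Y appears as a reactant in no reaction), then f is superadditive: f(x1) + f(x2) \leq f(x1 + x2) for all inputs x1, x2. -/

import Mathlib

/-- A flux vector `u` is applicable at state `c` if every reaction with positive
flux has all of its reactants present (positive concentration) in `c`. -/
def Applicable {σ ρ : Type} (react : ρ → σ → ℕ) (u : ρ → ℝ) (c : σ → ℝ) : Prop :=
  ∀ r, 0 < u r → ∀ s, 0 < react r s → 0 < c s

/-- Net change of species `s` caused by applying flux vector `u`
(the stoichiometry matrix applied to `u`). -/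
noncomputable def StoichAct {σ ρ : Type} [Fintype ρ] (react prod : ρ → σ → ℕ)
    (u : ρ → ℝ) (s : σ) : ℝ :=
  ∑ r, u r * ((prod r s : ℝ) - (react r s : ℝ))

/-- State `d` is straight-line reachable from `c` via flux vector `u`. -/
def SLReach {σ ρ : Type} [Fintype ρ] (react prod : ρ → σ → ℕ)
    (u : ρ → ℝ) (c d : σ → ℝ) : Prop :=
  (∀ r, 0 ≤ u r) ∧ Applicable react u c ∧ (∀ s, 0 ≤ d s) ∧
    ∀ s, d s = c s + StoichAct react prod u s

/-- Flux vector `u` consumes species `s`. -/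
def Consumes {σ ρ : Type} (react : ρ → σ → ℕ) (u : ρ → ℝ) (s : σ) : Prop :=
  ∃ r, 0 < u r ∧ 0 < react r s

/-- Flux vector `u` produces species `s`. -/
def Produces {σ ρ : Type} (prod : ρ → σ → ℕ) (u : ρ → ℝ) (s : σ) : Prop :=
  ∃ r, 0 < u r ∧ 0 < prod r s

/-- `u1` is independent of `u2`: `u1` consumes no species produced or consumed by `u2`. -/
def Independent {σ ρ : Type} (react prod : ρ → σ → ℕ) (u1 u2 : ρ → ℝ) : Prop :=
  ∀ s, Consumes react u1 s → ¬ Consumes react u2 s ∧ ¬ Produces prod u2 s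

/-- Reachability: a finite sequence of straight-line segments. -/
def Reach {σ ρ : Type} [Fintype ρ] (react prod : ρ → σ → ℕ) (c d : σ → ℝ) : Prop :=
  Relation.ReflTransGen (fun x y => ∃ u, SLReach react prod u x y) c d

open Classical in
/-- Initial state encoding input `x` on the input species `X i`, all other species 0. -/
noncomputable def InitState {σ : Type} {n : ℕ} (X : Fin n → σ) (x : Fin n → ℝ) : σ → ℝ :=
  fun s => ∑ i, if X i = s then x i else 0

/-- A state `o` is output stable if no reachable state changes the output concentration. -/
def OutputStable {σ ρ : Type} [Fintype ρ] (react prod : ρ → σ → ℕ) (Y : σ)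
    (o : σ → ℝ) : Prop :=
  ∀ o', Reach react prod o o' → o' Y = o Y

/-- The CRC with input species `X`, output species `Y` stably computes `f`:
from every state reachable from an input state, an output stable state with
output concentration `f x` is reachable. -/
def StablyComputes {σ ρ : Type} [Fintype ρ] {n : ℕ} (react prod : ρ → σ → ℕ)
    (X : Fin n → σ) (Y : σ) (f : (Fin n → ℝ) → ℝ) : Prop :=
  ∀ x : Fin n → ℝ, (∀ i, 0 ≤ x i) →
    ∀ c, Reach react prod (InitState X x) c →
      ∃ o, Reach react prod c o ∧ OutputStable react prod Y o ∧ o Y = f x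

/-!
Adding a nonnegative state to both ends of a reaction trajectory keeps it a trajectory. So from
`x1 + x2` the CRC can first run `x1` to an output-stable `o1`, then run `x2` on the remaining
input to `o2`, reaching `o1 + o2`. From there it must still reach a state with output
`f (x1 + x2)`, and since `Y` is never consumed, the output cannot drop below `f x1 + f x2`.
-/

section Reachability

variable {σ ρ : Type} [Fintype ρ] {react prod : ρ → σ → ℕ}

theorem SLReach.add_right {u : ρ → ℝ} {c d e : σ → ℝ} (he : ∀ s, 0 ≤ e s)
    (h : SLReach react prod u c d) : SLReach react prod u (c + e) (d + e) := by
  obtain ⟨hu, happ, hd, hstep⟩ := h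
  refine ⟨hu, fun r hr s hs => ?_, fun s => ?_, fun s => ?_⟩
  · exact add_pos_of_pos_of_nonneg (happ r hr s hs) (he s)
  · exact add_nonneg (hd s) (he s)
  · simp only [Pi.add_apply, hstep s]
    ring

theorem Reach.add_right {c d e : σ → ℝ} (he : ∀ s, 0 ≤ e s) (h : Reach react prod c d) :
    Reach react prod (c + e) (d + e) := by
  induction h with
  | refl => exact .refl
  | tail _ hstep ih =>
    obtain ⟨u, hu⟩ := hstep
    exact ih.tail ⟨u, hu.add_right he⟩

theorem Reach.add_left {c d e : σ → ℝ} (he : ∀ s, 0 ≤ e s) (h : Reach react prod c d) :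
    Reach react prod (e + c) (e + d) := by
  simpa only [add_comm e] using h.add_right he

theorem Reach.nonneg {c d : σ → ℝ} (h : Reach react prod c d) (hc : ∀ s, 0 ≤ c s) :
    ∀ s, 0 ≤ d s := by
  induction h with
  | refl => exact hc
  | tail _ hstep _ =>
    obtain ⟨u, hu⟩ := hstep
    exact hu.2.2.1

theorem stoichAct_nonneg_of_not_reactant {u : ρ → ℝ} (hu : ∀ r, 0 ≤ u r) {Y : σ}
    (hY : ∀ r, react r Y = 0) : 0 ≤ StoichAct react prod u Y :=
  Finset.sum_nonneg fun r _ => by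
    simpa only [hY r, Nat.cast_zero, sub_zero] using mul_nonneg (hu r) (Nat.cast_nonneg _)

theorem Reach.apply_le_of_not_reactant {c d : σ → ℝ} (h : Reach react prod c d) {Y : σ}
    (hY : ∀ r, react r Y = 0) : c Y ≤ d Y := by
  induction h with
  | refl => exact le_rfl
  | tail _ hstep ih =>
    obtain ⟨u, hu, -, -, hd⟩ := hstep
    rw [hd Y]
    linarith [stoichAct_nonneg_of_not_reactant hu hY (prod := prod)]

end Reachability

section InitState

variable {σ : Type} {n : ℕ} (X : Fin n → σ)

theorem initState_nonneg {x : Fin n → ℝ} (hx : ∀ i, 0 ≤ x i) : ∀ s, 0 ≤ InitState X x s :=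
  fun _ => Finset.sum_nonneg fun i _ => by split <;> [exact hx i; exact le_rfl]

theorem initState_add (x1 x2 : Fin n → ℝ) :
    InitState X (x1 + x2) = InitState X x1 + InitState X x2 := by
  funext s
  simp only [InitState, Pi.add_apply, ← Finset.sum_add_distrib]
  refine Finset.sum_congr rfl fun i _ => ?_
  split <;> simp

end InitState

theorem output_oblivious_superadditive_general {σ ρ : Type} [Fintype ρ] {n : ℕ}
    (react prod : ρ → σ → ℕ) (X : Fin n → σ)
    (Y : σ)
    (hob : ∀ r, react r Y = 0)
    (f : (Fin n → ℝ) → ℝ)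
    (hcomp : StablyComputes react prod X Y f) :
    ∀ x1 x2 : Fin n → ℝ, (∀ i, 0 ≤ x1 i) → (∀ i, 0 ≤ x2 i) →
      f x1 + f x2 ≤ f (x1 + x2) := by
  intro x1 x2 hx1 hx2
  obtain ⟨o1, ho1, -, ho1Y⟩ := hcomp x1 hx1 _ .refl
  obtain ⟨o2, ho2, -, ho2Y⟩ := hcomp x2 hx2 _ .refl
  have ho1_nonneg := ho1.nonneg (initState_nonneg X hx1)
  have hreach : Reach react prod (InitState X (x1 + x2)) (o1 + o2) := by
    rw [initState_add]
    exact (ho1.add_right (initState_nonneg X hx2)).trans (ho2.add_left ho1_nonneg)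
  obtain ⟨o, ho, -, hoY⟩ := hcomp (x1 + x2) (fun i => add_nonneg (hx1 i) (hx2 i)) _ hreach
  calc f x1 + f x2 = (o1 + o2) Y := by rw [Pi.add_apply, ho1Y, ho2Y]
    _ ≤ o Y := ho.apply_le_of_not_reactant hob
    _ = f (x1 + x2) := hoY

/-- If an output-oblivious CRC (the output species `Y` is never a reactant) stably
computes `f`, then `f` is superadditive. -/
theorem output_oblivious_superadditive {σ ρ : Type} [Fintype ρ] {n : ℕ}
    (react prod : ρ → σ → ℕ) (X : Fin n → σ) (hX : Function.Injective X)
    (Y : σ) (hY : Y ∉ Set.range X)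
    (hob : ∀ r, react r Y = 0)
    (f : (Fin n → ℝ) → ℝ)
    (hcomp : StablyComputes react prod X Y f) :
    ∀ x1 x2 : Fin n → ℝ, (∀ i, 0 ≤ x1 i) → (∀ i, 0 ≤ x2 i) →
      f x1 + f x2 ≤ f (x1 + x2) :=
  output_oblivious_superadditive_general react prod X Y hob f hcomp
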